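/- arXiv:2511.19293 — 2 statements merged into one kernel-verified Lean document; each statement's English description precedes it below -/
import Mathlib

section
/- If w₁ and w₂ are prime words with w₁ ⪰_r w₂, then the concatenation w = w₁w₂ is also a prime word, and w ≻_r w₁ ⪰_r w₂. -/
/-- The alphabet `X = O ∪ D*`: the original set `O` together with a disjoint mirror copy `D*`
of the subset `D ⊆ O`. -/
abbrev Letter {O : Type*} (D : Set O) : Type _ := O ⊕ {x : O // x ∈ D}

/-- The original element `o(x) ∈ O` of a letter `x ∈ X = O ∪ D*`. -/
def orig {O : Type*} {D : Set O} : Letter D → O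
  | Sum.inl x => x
  | Sum.inr x => x.1

/-- The order `≺` on `X = O ∪ D*`: `x ≺ y` iff `o(x) <_O o(y)`, or `o(x) = o(y) = x` and
`y = x*` (i.e. `x` is original and `y` is its mirror). -/
def precX {O : Type*} [LinearOrder O] {D : Set O} (x y : Letter D) : Prop :=
  orig x < orig y ∨ (orig x = orig y ∧ x.isLeft = true ∧ y.isRight = true)

/-- The reduction order `≺_r` on words: `1 ≺_r α` for every non-empty `α`, and for non-empty
words, first compare the original element of the first letter, then the length, then the
lexicographic order induced by `≺`. -/
def rlt {O : Type*} [LinearOrder O] {D : Set O} : List (Letter D) → List (Letter D) → Prop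
  | _, [] => False
  | [], _ :: _ => True
  | x :: α, y :: β =>
      orig x < orig y ∨ (orig x = orig y ∧
        ((x :: α).length < (y :: β).length ∨
         ((x :: α).length = (y :: β).length ∧ List.Lex precX (x :: α) (y :: β))))

/-- `αR` is the greatest suffix of `α` with respect to the reduction order `≺_r`.  The
reduction-factorization of `α` is `α = αL ++ αR` with `αR` its greatest suffix. -/
def GreatestSuffix {O : Type*} [LinearOrder O] {D : Set O} (α αR : List (Letter D)) : Prop :=
  αR <:+ α ∧ ∀ β, β <:+ α → β ≠ αR → rlt β αR

/-- `m` is the greatest letter occurring in the word `α` (with respect to `≺`). -/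
def IsMaxLetter {O : Type*} [LinearOrder O] {D : Set O} (α : List (Letter D))
    (m : Letter D) : Prop :=
  m ∈ α ∧ ∀ b ∈ α, b = m ∨ precX b m

/-- A non-empty word `α` is prime if `α_R = α` in its reduction-factorization, i.e. `α` is the
greatest suffix of itself with respect to `≺_r`. -/
def IsPrimeWord {O : Type*} [LinearOrder O] {D : Set O} (α : List (Letter D)) : Prop :=
  α ≠ [] ∧ GreatestSuffix α α

/-!
A non-empty word is prime exactly when the original element of its first letter is maximal among
those of all its letters: a proper suffix is strictly shorter, and `≺_r` compares first letters
before lengths. This condition passes to `w₁w₂`, since `w₁ ⪰_r w₂` bounds the first letter of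
`w₂`, and hence every letter of `w₂`, by the first letter of `w₁`.
-/

section ReductionOrder

variable {O : Type*} [LinearOrder O] {D : Set O}

lemma orig_le_of_rlt_cons {x y : Letter D} {α β : List (Letter D)}
    (h : rlt (x :: α) (y :: β)) : orig x ≤ orig y := by
  rcases h with h | ⟨h, -⟩
  · exact h.le
  · exact h.le

lemma rlt_cons_of_orig_le_of_length_lt {x y : Letter D} {α β : List (Letter D)}
    (horig : orig x ≤ orig y) (hlen : (x :: α).length < (y :: β).length) :
    rlt (x :: α) (y :: β) := by
  rcases horig.lt_or_eq with h | h
  · exact Or.inl h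
  · exact Or.inr ⟨h, Or.inl hlen⟩

theorem isPrimeWord_cons_iff {a : Letter D} {t : List (Letter D)} :
    IsPrimeWord (a :: t) ↔ ∀ c ∈ a :: t, orig c ≤ orig a := by
  constructor
  · intro h c hc
    obtain ⟨s, δ, hsplit⟩ := List.mem_iff_append.mp hc
    have hsuffix : c :: δ <:+ a :: t := ⟨s, hsplit.symm⟩
    by_cases heq : c :: δ = a :: t
    · exact (congrArg orig (List.cons.inj heq).1).le
    · exact orig_le_of_rlt_cons (h.2.2 _ hsuffix heq)
  · intro h
    refine ⟨List.cons_ne_nil _ _, List.suffix_refl _, fun β hβ hne => ?_⟩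
    have hlen : β.length < (a :: t).length :=
      hβ.length_le.lt_of_ne fun hl => hne (hβ.eq_of_length hl)
    cases β with
    | nil => trivial
    | cons c δ => exact rlt_cons_of_orig_le_of_length_lt (h c (hβ.subset List.mem_cons_self)) hlen

end ReductionOrder

theorem primeWord_append_general {O : Type*} [LinearOrder O] {D : Set O}
    (w₁ w₂ : List (Letter D)) (h₁ : IsPrimeWord w₁) (h₂ : IsPrimeWord w₂)
    (hle : w₂ = w₁ ∨ rlt w₂ w₁) :
    IsPrimeWord (w₁ ++ w₂) ∧ rlt w₁ (w₁ ++ w₂) ∧ (w₂ = w₁ ∨ rlt w₂ w₁) := by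
  obtain ⟨a, t₁, rfl⟩ := List.exists_cons_of_ne_nil h₁.1
  obtain ⟨b, t₂, rfl⟩ := List.exists_cons_of_ne_nil h₂.1
  have hba : orig b ≤ orig a := by
    rcases hle with h | h
    · exact (congrArg orig (List.cons.inj h).1).le
    · exact orig_le_of_rlt_cons h
  refine ⟨?_, rlt_cons_of_orig_le_of_length_lt le_rfl (by simp), hle⟩
  rw [List.cons_append, isPrimeWord_cons_iff, ← List.cons_append]
  intro c hc
  rcases List.mem_append.mp hc with hc | hc
  · exact isPrimeWord_cons_iff.mp h₁ c hc
  · exact (isPrimeWord_cons_iff.mp h₂ c hc).trans hba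

/-- If `w₁` and `w₂` are prime words with `w₁ ⪰_r w₂`, then the
concatenation `w = w₁w₂` is also a prime word and `w ≻_r w₁ ⪰_r w₂`. -/
theorem primeWord_append {O : Type*} [LinearOrder O] [WellFoundedLT O] {D : Set O}
    (w₁ w₂ : List (Letter D)) (h₁ : IsPrimeWord w₁) (h₂ : IsPrimeWord w₂)
    (hle : w₂ = w₁ ∨ rlt w₂ w₁) :
    IsPrimeWord (w₁ ++ w₂) ∧ rlt w₁ (w₁ ++ w₂) ∧ (w₂ = w₁ ∨ rlt w₂ w₁) :=
  primeWord_append_general w₁ w₂ h₁ h₂ hle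
end

section
/- Let (A, ε_A) be an augmented k-algebra with generating set X = O ∪ D* contained in ker ε_A, π : k⟨X⟩ → A the canonical projection, and I = ker π. If A is right Noetherian, then the set X_I ∩ O of I-irreducible letters lying in O is finite. -/
/-- The free algebra `k⟨X⟩` on the alphabet `X = O ∪ D*`, realized as the monoid algebra of
the free monoid on `X`. -/
abbrev FA (k : Type*) [Field k] {O : Type*} (D : Set O) : Type _ :=
  MonoidAlgebra k (FreeMonoid (Letter D))

/-- The word `w ∈ ⟨X⟩` viewed as a basis element of the free algebra `k⟨X⟩`. -/
noncomputable def wsingle (k : Type*) [Field k] {O : Type*} {D : Set O} (w : List (Letter D)) : FA k D :=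
  MonoidAlgebra.single (FreeMonoid.ofList w) 1

/-- The augmentation `ε : k⟨X⟩ → k` with `ε(X) = 0` (each letter is sent to `0`). -/
noncomputable def aug (k : Type*) [Field k] {O : Type*} (D : Set O) : FA k D →ₐ[k] k :=
  MonoidAlgebra.lift k k (FreeMonoid (Letter D)) (FreeMonoid.lift fun _ => (0 : k))

/-- `ω` is the leading word `LW(f)` of `f`: the `≺_r`-greatest word appearing in `f` with a
non-zero coefficient. -/
def IsLeadingWord {k : Type*} [Field k] {O : Type*} [LinearOrder O] {D : Set O}
    (f : FA k D) (ω : List (Letter D)) : Prop :=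
  FreeMonoid.ofList ω ∈ f.coeff.support ∧
    ∀ β ∈ f.coeff.support, FreeMonoid.toList β ≠ ω → rlt (FreeMonoid.toList β) ω

/-- A word `ω` is `I`-reducible if `ω = LW(f)` for some `f ∈ I`; otherwise `ω` is
`I`-irreducible. -/
def IsReducible {k : Type*} [Field k] {O : Type*} [LinearOrder O] {D : Set O}
    (I : Ideal (FA k D)) (ω : List (Letter D)) : Prop :=
  ∃ f ∈ I, IsLeadingWord f ω

/-!
Over a well-ordered `O`, an irreducible letter `t ∈ O` cannot have `π(t)` in the right ideal
generated by the images of the letters `y` with `o(y) < t`: a right combination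
`π(t) = ∑ π(yᵢ) aᵢ` lifts to `t - ∑ yᵢ gᵢ ∈ I`, whose leading word is `t` because every other word
starts with some `yᵢ`. Hence `o ↦ ⟨π(y) : o(y) ≤ o⟩` is strictly increasing on the irreducible
letters, so right Noetherianity makes that set well-founded for `>` as well as for `<`, i.e.
finite.
-/

theorem StrictMonoOn.finite {α β : Type*} [LinearOrder α] [WellFoundedLT α] [Preorder β]
    [WellFoundedGT β] {f : α → β} {T : Set α} (hf : StrictMonoOn f T) : T.Finite := by
  have : WellFoundedGT T :=
    StrictMono.wellFoundedGT (f := fun t : T => f t) fun s t h => hf s.2 t.2 h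
  have := Finite.of_wellFoundedLT_wellFoundedGT T
  exact Set.toFinite T

section Words

variable {k : Type*} [Field k] {O : Type*} [LinearOrder O] {D : Set O}

theorem precX_irrefl (x : Letter D) : ¬ precX x x := by
  rintro (h | ⟨-, hl, hr⟩)
  · exact lt_irrefl _ h
  · cases x <;> simp_all

theorem lex_precX_irrefl : ∀ ω : List (Letter D), ¬ List.Lex precX ω ω
  | [], h => nomatch h
  | x :: _, .rel h => precX_irrefl x h
  | _ :: ω, .cons h => lex_precX_irrefl ω h

theorem rlt_irrefl : ∀ ω : List (Letter D), ¬ rlt ω ω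
  | [], h => h
  | x :: ω, h => by
    rcases h with h | ⟨-, h | ⟨-, h⟩⟩
    · exact lt_irrefl _ h
    · exact lt_irrefl _ h
    · exact lex_precX_irrefl _ h

theorem isLeadingWord_wsingle_sub {ω : List (Letter D)} {r : FA k D}
    (hr : ∀ β ∈ r.coeff.support, rlt β.toList ω) : IsLeadingWord (wsingle k ω - r) ω := by
  classical
  have hω : r.coeff (FreeMonoid.ofList ω) = 0 := by
    by_contra h
    exact rlt_irrefl ω (hr _ (Finsupp.mem_support_iff.mpr h))
  refine ⟨?_, fun β hβ hne => ?_⟩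
  · simp [wsingle, MonoidAlgebra.coeff_sub, hω]
  · rw [MonoidAlgebra.coeff_sub] at hβ
    rcases Finset.mem_union.mp (Finsupp.support_sub hβ) with h | h
    · simp only [wsingle, MonoidAlgebra.coeff_single, Finsupp.support_single _ one_ne_zero,
        Finset.mem_singleton] at h
      exact absurd (by simp [h]) hne
    · exact hr β h

theorem rlt_singleton_of_mem_support_wsingle_mul {x y : Letter D} (h : orig y < orig x)
    (p : FA k D) : ∀ β ∈ (wsingle k [y] * p).coeff.support, rlt β.toList [x] := by
  classical
  intro β hβ
  obtain ⟨γ, -, rfl⟩ :=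
    Finset.mem_image.mp (MonoidAlgebra.support_coeff_single_mul_subset _ _ _ hβ)
  exact Or.inl h

theorem rlt_of_mem_support_sum {ω : List (Letter D)} {ι : Type*} (s : Finset ι)
    (r : ι → FA k D) (hr : ∀ i ∈ s, ∀ β ∈ (r i).coeff.support, rlt β.toList ω) :
    ∀ β ∈ (∑ i ∈ s, r i).coeff.support, rlt β.toList ω := by
  classical
  intro β hβ
  rw [MonoidAlgebra.coeff_sum] at hβ
  obtain ⟨i, hi, hβi⟩ := Finset.mem_biUnion.mp (Finsupp.support_finsetSum hβ)
  exact hr i hi β hβi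

variable {A : Type*} [Ring A] [Algebra k A]

/-- The right ideal `π(Y)·A`, encoded as a left ideal of `Aᵐᵒᵖ`. -/
def lettersRightIdeal (π : FA k D →ₐ[k] A) (Y : Set (Letter D)) : Ideal Aᵐᵒᵖ :=
  Ideal.span ((fun y => MulOpposite.op (π (wsingle k [y]))) '' Y)

theorem isReducible_of_mem_lettersRightIdeal {π : FA k D →ₐ[k] A} (hπ : Function.Surjective π)
    {x : Letter D} {Y : Set (Letter D)} (hY : ∀ y ∈ Y, orig y < orig x)
    (hx : MulOpposite.op (π (wsingle k [x])) ∈ lettersRightIdeal π Y) :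
    IsReducible (RingHom.ker π.toRingHom) [x] := by
  obtain ⟨l, hlY, hl⟩ := (Finsupp.mem_span_image_iff_linearCombination _).mp hx
  choose g hg using hπ
  set r : FA k D := ∑ y ∈ l.support, wsingle k [y] * g (l y).unop
  have hr : π r = π (wsingle k [x]) := by
    apply MulOpposite.op_injective
    rw [← hl, Finsupp.linearCombination_apply, Finsupp.sum]
    simp [r, hg]
  refine ⟨wsingle k [x] - r, ?_, isLeadingWord_wsingle_sub ?_⟩
  · simp [RingHom.mem_ker, hr]
  · exact rlt_of_mem_support_sum _ _ fun y hy =>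
      rlt_singleton_of_mem_support_wsingle_mul (hY y (hlY hy)) _

theorem strictMonoOn_lettersRightIdeal {π : FA k D →ₐ[k] A} (hπ : Function.Surjective π) :
    StrictMonoOn (fun o => lettersRightIdeal π {y | orig y ≤ o})
      {o | ¬ IsReducible (RingHom.ker π.toRingHom) [Sum.inl o]} := by
  intro s _ t ht hst
  refine SetLike.lt_iff_le_and_exists.mpr
    ⟨Ideal.span_mono (Set.image_mono fun y hy => le_trans hy hst.le), _,
      Ideal.subset_span ⟨Sum.inl t, le_rfl, rfl⟩, fun hs => ht ?_⟩
  exact isReducible_of_mem_lettersRightIdeal hπ (fun y hy => lt_of_le_of_lt hy hst) hs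

end Words

theorem noetherian_finitely_many_irreducible_letters_general {k : Type*} [Field k] {O : Type*}
    [LinearOrder O] [WellFoundedLT O] {D : Set O}
    {A : Type*} [Ring A] [Algebra k A] (π : FA k D →ₐ[k] A)
    (hsurj : Function.Surjective π)
    (hnoeth : IsNoetherianRing Aᵐᵒᵖ) :
    {x : Letter D | x.isLeft = true ∧
      ¬ IsReducible (RingHom.ker π.toRingHom) [x]}.Finite := by
  refine ((strictMonoOn_lettersRightIdeal hsurj).finite.image Sum.inl).subset ?_
  rintro (o | o) ⟨hleft, hirr⟩
  · exact ⟨o, hirr, rfl⟩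
  · simp at hleft

/-- Let `(A, ε_A)` be an augmented `k`-algebra generated by a well-ordered
set `X = O ∪ D*` contained in `ker ε_A`, let `π : k⟨X⟩ → A` be the canonical projection
(an algebra surjection sending each letter into `ker ε_A`) and `I = ker π`.  If `A` is right
Noetherian, then the set `X_I ∩ O` of `I`-irreducible letters lying in `O` is finite. -/
theorem noetherian_finitely_many_irreducible_letters {k : Type*} [Field k] {O : Type*}
    [LinearOrder O] [WellFoundedLT O] {D : Set O}
    {A : Type*} [Ring A] [Algebra k A] (εA : A →ₐ[k] k) (π : FA k D →ₐ[k] A)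
    (hsurj : Function.Surjective π)
    (hX : ∀ x : Letter D, εA (π (wsingle k [x])) = 0)
    (hnoeth : IsNoetherianRing Aᵐᵒᵖ) :
    {x : Letter D | x.isLeft = true ∧
      ¬ IsReducible (RingHom.ker π.toRingHom) [x]}.Finite :=
  noetherian_finitely_many_irreducible_letters_general π hsurj hnoeth
end
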